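/- Let τ = (1+√5)/2 (or τ = (1−√5)/2), so τ² = τ + 1. Then setting z₁₂ = z₂₁ = z₃₄ = z₄₃ = w₁₂ = w₂₁ = w₃₄ = w₄₃ = 1 + τ (with the remaining coordinates determined by the standard cross-ratio relations) satisfies the edge, face, and unipotent holonomy equations of the figure-eight knot sister manifold triangulation, and all coordinates are real. -/
import Mathlib


/-- The edge equations, face equations and unipotent boundary-holonomy equations
(`A = A* = B = B* = 1`) of the two-tetrahedron triangulation of the figure-eight
knot sister manifold, in terms of the eight primary edge coordinates; remaining
coordinates are given by the standard cross-ratio relations `L_r`. -/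
def sisterUnipotentEqs (z12 z21 z34 z43 w12 w21 w34 w43 : ℂ) : Prop :=
  let z13 := 1 / (1 - z12); let z14 := (z12 - 1) / z12
  let z23 := (z21 - 1) / z21; let z24 := 1 / (1 - z21)
  let z31 := 1 / (1 - z34); let z32 := (z34 - 1) / z34
  let z41 := (z43 - 1) / z43; let z42 := 1 / (1 - z43)
  let w13 := 1 / (1 - w12); let w14 := (w12 - 1) / w12
  let w23 := (w21 - 1) / w21; let w24 := 1 / (1 - w21)
  let w31 := 1 / (1 - w34); let w32 := (w34 - 1) / w34
  let w41 := (w43 - 1) / w43; let w42 := 1 / (1 - w43)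
  -- edge equations
  (z23 * z34 * z41 * w23 * w34 * w41 = 1) ∧
  (z32 * z43 * z14 * w32 * w43 * w14 = 1) ∧
  (z12 * z24 * z31 * w12 * w24 * w31 = 1) ∧
  (z21 * z42 * z13 * w21 * w42 * w13 = 1) ∧
  -- face equations
  (z21 * z31 * z41 * w12 * w32 * w42 = 1) ∧
  (z12 * z32 * z42 * w21 * w31 * w41 = 1) ∧
  (z13 * z43 * z23 * w14 * w34 * w24 = 1) ∧
  (z14 * z24 * z34 * w13 * w23 * w43 = 1) ∧
  -- unipotent holonomy equations A = A* = B = B* = 1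
  (w32 * w21 * 1 = z12 * z41) ∧
  (z21 * w32 * z14 * w21 * 1 = w14 * w41 * w34 * w43) ∧
  (w14 * w23 * 1 = z31 * z42) ∧
  (z13 * w14 * z24 * w23 * 1 = w23 * w32 * w14 * w41)


theorem stmt_11 (τ : ℝ) (hτ : τ ^ 2 = τ + 1) (c : ℂ) (hc : c = ((1 + τ : ℝ) : ℂ)) :
    sisterUnipotentEqs c c c c c c c c ∧
    c.im = 0 ∧ (1 / (1 - c)).im = 0 ∧ ((c - 1) / c).im = 0 := by
  have hτ0 : τ ≠ 0 := by intro h; rw [h] at hτ; norm_num at hτ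
  set t : ℂ := ((τ : ℝ) : ℂ) with htdef
  have ht : t ^ 2 = t + 1 := by
    have := congrArg (fun x : ℝ => (x : ℂ)) hτ
    push_cast at this
    simpa [htdef] using this
  have ht0 : t ≠ 0 := by simpa [htdef] using hτ0
  have hcc : c = 1 + t := by rw [hc]; push_cast; ring
  have h1c : 1 - c = -t := by rw [hcc]; ring
  have hc0 : c ≠ 0 := by
    have h2 : c = t ^ 2 := by rw [hcc, ht]; ring
    rw [h2]; exact pow_ne_zero 2 ht0
  have hA : 1 / (1 - c) = 1 - t := by
    rw [h1c, div_eq_iff (neg_ne_zero.mpr ht0)]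
    linear_combination -ht
  have hB : (c - 1) / c = t - 1 := by
    rw [div_eq_iff hc0, hcc]
    linear_combination -ht
  refine ⟨?_, ?_, ?_, ?_⟩
  · unfold sisterUnipotentEqs
    rw [hA, hB, hcc]
    refine ⟨?_,?_,?_,?_,?_,?_,?_,?_,?_,?_,?_,?_⟩ <;>
      first
        | ring1
        | linear_combination (t^4 - t^3 - t^2 + 2*t) * ht
  · rw [hc]; simp
  · rw [hA, htdef]; simp
  · rw [hB, htdef]; simp
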